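/- Let λ₁, λ₂ > 0 and c > 0, and let R₁, R₂ be as in the context. Then ℙ(R₁ < c R₂) = 1 − (λ₂/(c √λ₁)) · exp( λ₂²/(π λ₁ c²) ) · erfc( λ₂/(c √(π λ₁)) ). -/

import Mathlib

open MeasureTheory Real ProbabilityTheory

/-- The complementary error function `erfc(x) = (2/√π) ∫_x^∞ e^{−t²} dt`. -/
noncomputable def erfc (x : ℝ) : ℝ :=
  (2 / Real.sqrt π) * ∫ t in Set.Ioi x, Real.exp (-t ^ 2)

/-!
Integrating out `R₂` by independence gives `ℙ(R₁ < c R₂) = 𝔼[exp(-a R₁)]` with `a = 2λ₂/c`.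
By the layer-cake formula, `1 - 𝔼[exp(-a R₁)] = ∫₀^∞ a e^{-at} ℙ(R₁ > t) dt
= a ∫₀^∞ e^{-at - πλ₁t²} dt`, and completing the square turns this into a Gaussian tail,
i.e. an `erfc` value.
-/

open Set

lemma integral_Ioi_exp_neg_sq (x : ℝ) :
    ∫ t in Ioi x, exp (-t ^ 2) = √π / 2 * erfc x := by
  have : √π ≠ 0 := by positivity
  rw [erfc]
  field_simp

lemma integral_Ioi_exp_neg_mul_sq {b : ℝ} (hb : 0 < b) (x : ℝ) :
    ∫ t in Ioi x, exp (-b * t ^ 2) = √π / (2 * √b) * erfc (√b * x) := by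
  have hsb : 0 < √b := sqrt_pos.mpr hb
  have hsq : ∀ t, -b * t ^ 2 = -(√b * t) ^ 2 := fun t => by rw [mul_pow, sq_sqrt hb.le, neg_mul]
  simp_rw [hsq]
  rw [integral_comp_mul_left_Ioi (fun s => exp (-s ^ 2)) x hsb, smul_eq_mul,
    integral_Ioi_exp_neg_sq]
  field_simp

lemma setIntegral_Ioi_comp_add_right {E : Type*} [NormedAddCommGroup E] [NormedSpace ℝ E]
    (f : ℝ → E) (a d : ℝ) :
    ∫ t in Ioi a, f (t + d) = ∫ t in Ioi (a + d), f t := by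
  have h := (MeasurableEquiv.addRight d).measurableEmbedding.setIntegral_map
    (μ := volume) f (Ioi (a + d))
  rw [MeasurableEquiv.coe_addRight, map_add_right_eq_self volume d] at h
  rw [h, preimage_add_const_Ioi, add_sub_cancel_right]

lemma exp_neg_mul_add_mul_sq_eq (a : ℝ) {b : ℝ} (hb : b ≠ 0) (t : ℝ) :
    exp (-(a * t + b * t ^ 2)) = exp (a ^ 2 / (4 * b)) * exp (-b * (t + a / (2 * b)) ^ 2) := by
  rw [← exp_add]
  congr 1
  field_simp
  ring

lemma integrable_exp_neg_mul_add_mul_sq (a : ℝ) {b : ℝ} (hb : 0 < b) :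
    Integrable fun t => exp (-(a * t + b * t ^ 2)) := by
  simp_rw [exp_neg_mul_add_mul_sq_eq a hb.ne']
  exact ((integrable_exp_neg_mul_sq hb).comp_add_right _).const_mul _

lemma integral_Ioi_zero_exp_neg_mul_add_mul_sq (a : ℝ) {b : ℝ} (hb : 0 < b) :
    ∫ t in Ioi 0, exp (-(a * t + b * t ^ 2))
      = √π / (2 * √b) * exp (a ^ 2 / (4 * b)) * erfc (a / (2 * √b)) := by
  have harg : √b * (0 + a / (2 * b)) = a / (2 * √b) := by
    have : √b ≠ 0 := (sqrt_pos.mpr hb).ne'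
    field_simp
    rw [sq_sqrt hb.le]
    ring
  simp_rw [exp_neg_mul_add_mul_sq_eq a hb.ne']
  rw [integral_const_mul,
    setIntegral_Ioi_comp_add_right (fun u => exp (-b * u ^ 2)) 0 (a / (2 * b)),
    integral_Ioi_exp_neg_mul_sq hb, harg]
  ring

lemma integral_mul_exp_neg_mul (a x : ℝ) :
    ∫ t in (0)..x, a * exp (-(a * t)) = 1 - exp (-(a * x)) := by
  have hderiv : ∀ t ∈ uIcc 0 x, HasDerivAt (fun t => -exp (-(a * t))) (a * exp (-(a * t))) t := by
    intro t _
    have h : HasDerivAt (fun t => -exp (-(a * t))) (-(exp (-(a * t)) * -(a * 1))) t :=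
      ((hasDerivAt_id' t).const_mul a).neg.exp.neg
    exact h.congr_deriv (by ring)
  rw [intervalIntegral.integral_eq_sub_of_hasDerivAt hderiv
    (by apply Continuous.intervalIntegrable; fun_prop)]
  simp only [mul_zero, neg_zero, exp_zero, sub_neg_eq_add]
  ring

section

variable {Ω : Type*} [MeasurableSpace Ω]

lemma ProbabilityTheory.IndepFun.measure_lt_const_mul {P : Measure Ω} [IsFiniteMeasure P]
    {X Y : Ω → ℝ} (hX : Measurable X) (hY : Measurable Y) (hXY : IndepFun X Y P) {c : ℝ} (hc : 0 < c) :
    P {ω | X ω < c * Y ω} = ∫⁻ ω, P {ω' | X ω / c < Y ω'} ∂P := by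
  have hs : MeasurableSet {p : ℝ × ℝ | p.1 < c * p.2} :=
    measurableSet_lt measurable_fst (measurable_snd.const_mul c)
  have hslice (x : ℝ) : Prod.mk x ⁻¹' {p : ℝ × ℝ | p.1 < c * p.2} = Ioi (x / c) := by
    ext y
    simp [div_lt_iff₀ hc, mul_comm]
  change P ((fun ω => (X ω, Y ω)) ⁻¹' {p : ℝ × ℝ | p.1 < c * p.2}) = _
  rw [← Measure.map_apply (hX.prodMk hY) hs,
    (indepFun_iff_map_prod_eq_prod_map_map hX.aemeasurable hY.aemeasurable).mp hXY,
    Measure.prod_apply hs, lintegral_map (measurable_measure_prodMk_left hs) hX]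
  simp_rw [hslice, Measure.map_apply hY measurableSet_Ioi]
  rfl

lemma lintegral_exp_neg_mul_eq_one_sub {μ : Measure Ω} [IsProbabilityMeasure μ] {X : Ω → ℝ}
    (hX : AEMeasurable X μ) (hX0 : 0 ≤ᵐ[μ] X) {a : ℝ} (ha : 0 ≤ a) :
    ∫⁻ ω, ENNReal.ofReal (exp (-(a * X ω))) ∂μ
      = 1 - ∫⁻ t in Ioi 0, μ {ω | t < X ω} * ENNReal.ofReal (a * exp (-(a * t))) := by
  have hlayer := lintegral_comp_eq_lintegral_meas_lt_mul μ hX0 hX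
    (g := fun t => a * exp (-(a * t)))
    (fun _ _ => by apply Continuous.intervalIntegrable; fun_prop)
    (ae_of_all _ fun t => by positivity)
  simp only [integral_mul_exp_neg_mul] at hlayer
  rw [← hlayer]
  refine ENNReal.eq_sub_of_add_eq' ENNReal.one_ne_top ?_
  rw [← lintegral_add_left' (by fun_prop)]
  calc _ = ∫⁻ _, 1 ∂μ := lintegral_congr_ae (hX0.mono fun ω hω => ?_)
    _ = 1 := by simp
  have : exp (-(a * X ω)) ≤ 1 := exp_le_one_iff.2 (neg_nonpos.2 (mul_nonneg ha hω))
  rw [← ENNReal.ofReal_add (exp_pos _).le (sub_nonneg.2 this), add_sub_cancel,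
    ENNReal.ofReal_one]

lemma lintegral_exp_neg_mul_of_tail_exp_neg_mul_sq {μ : Measure Ω} [IsProbabilityMeasure μ]
    {X : Ω → ℝ} (hX : AEMeasurable X μ) (hX0 : 0 ≤ᵐ[μ] X) {a b : ℝ} (ha : 0 ≤ a) (hb : 0 < b)
    (htail : ∀ t, 0 ≤ t → μ {ω | t < X ω} = ENNReal.ofReal (exp (-(b * t ^ 2)))) :
    ∫⁻ ω, ENNReal.ofReal (exp (-(a * X ω))) ∂μ
      = ENNReal.ofReal (1 - a * (√π / (2 * √b) * exp (a ^ 2 / (4 * b)) * erfc (a / (2 * √b)))) := by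
  have htail_integral : ∫⁻ t in Ioi 0, μ {ω | t < X ω} * ENNReal.ofReal (a * exp (-(a * t)))
      = ENNReal.ofReal (a * ∫ t in Ioi 0, exp (-(a * t + b * t ^ 2))) := by
    rw [← integral_const_mul, ofReal_integral_eq_lintegral_ofReal
      ((integrable_exp_neg_mul_add_mul_sq a hb).integrableOn.const_mul a)
      (ae_of_all _ fun t => by positivity)]
    refine setLIntegral_congr_fun measurableSet_Ioi fun t ht => ?_
    rw [htail t ht.le, ← ENNReal.ofReal_mul (exp_pos _).le, mul_left_comm, ← exp_add]
    congr 3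
    ring
  rw [lintegral_exp_neg_mul_eq_one_sub hX hX0 ha, htail_integral, ← ENNReal.ofReal_one,
    ← ENNReal.ofReal_sub _ (by positivity), integral_Ioi_zero_exp_neg_mul_add_mul_sq a hb]

end

theorem prob_assoc_tier_one {Ω : Type*} [MeasurableSpace Ω]
    (P : Measure Ω) [IsProbabilityMeasure P]
    (R₁ R₂ : Ω → ℝ) (hR₁ : Measurable R₁) (hR₂ : Measurable R₂)
    (hindep : IndepFun R₁ R₂ P)
    (hR₁_nonneg : ∀ ω, 0 ≤ R₁ ω)
    (lam₁ lam₂ c : ℝ) (hlam₁ : 0 < lam₁) (hlam₂ : 0 < lam₂) (hc : 0 < c)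
    (hsurv₁ : ∀ r : ℝ, 0 ≤ r →
      P {ω | r < R₁ ω} = ENNReal.ofReal (Real.exp (-(π * lam₁ * r ^ 2))))
    (hsurv₂ : ∀ r : ℝ, 0 ≤ r →
      P {ω | r < R₂ ω} = ENNReal.ofReal (Real.exp (-(2 * lam₂ * r)))) :
    P {ω | R₁ ω < c * R₂ ω}
      = ENNReal.ofReal (1 - (lam₂ / (c * Real.sqrt lam₁)) *
          Real.exp (lam₂ ^ 2 / (π * lam₁ * c ^ 2)) *
          erfc (lam₂ / (c * Real.sqrt (π * lam₁)))) := by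
  obtain ⟨a, ha_def⟩ : ∃ a, a = 2 * lam₂ / c := ⟨_, rfl⟩
  have hlaplace : P {ω | R₁ ω < c * R₂ ω} = ∫⁻ ω, ENNReal.ofReal (exp (-(a * R₁ ω))) ∂P := by
    rw [hindep.measure_lt_const_mul hR₁ hR₂ hc]
    refine lintegral_congr fun ω => ?_
    rw [hsurv₂ _ (div_nonneg (hR₁_nonneg ω) hc.le), ha_def]
    congr 3
    field_simp
  rw [hlaplace, lintegral_exp_neg_mul_of_tail_exp_neg_mul_sq hR₁.aemeasurable
    (ae_of_all _ hR₁_nonneg) (ha_def ▸ by positivity) (by positivity) hsurv₁]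
  have hexp : a ^ 2 / (4 * (π * lam₁)) = lam₂ ^ 2 / (π * lam₁ * c ^ 2) := by
    rw [ha_def]; field_simp; norm_num
  have herfc : a / (2 * √(π * lam₁)) = lam₂ / (c * √(π * lam₁)) := by rw [ha_def]; field_simp
  have hcoeff : a * (√π / (2 * √(π * lam₁))) = lam₂ / (c * √lam₁) := by
    rw [ha_def, sqrt_mul pi_pos.le]
    field_simp
  rw [hexp, herfc, ← hcoeff]
  congr 1
  ring
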